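/- (Saturated cut gives equality of flow value and cut capacity) Let V be a finite type, s t : V with s ≠ t, c : V → V → ℝ with c u v ≥ 0, and f : V → V → ℝ with 0 ≤ f u v ≤ c u v for all u, v, satisfying conservation at every vertex other than s and t. Suppose U is an S-T cut (s ∈ U, t ∉ U) such that f u v = c u v for every forward edge with u ∈ U and v ∉ U, and f u v = 0 for every backward edge with u ∉ U and v ∈ U. Then the value of f equals the capacity of U: Σ_{w} f s w − Σ_{u} f u s = Σ_{u ∈ U, v ∉ U} c u v. -/
import Mathlib


open Finset

/-- Saturated cut gives equality: if a flow saturates every forward edge of an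
S-T cut U and is zero on every backward edge, then the value of the flow
equals the capacity of U. -/
theorem saturated_cut_value_eq_capacity {V : Type*} [Fintype V] [DecidableEq V]
    (s t : V) (hst : s ≠ t) (c : V → V → ℝ) (hc : ∀ u v, 0 ≤ c u v)
    (f : V → V → ℝ) (hf_nonneg : ∀ u v, 0 ≤ f u v) (hf_cap : ∀ u v, f u v ≤ c u v)
    (hcons : ∀ v, v ≠ s → v ≠ t → (∑ u, f u v) = (∑ w, f v w))
    (U : Finset V) (hs : s ∈ U) (ht : t ∉ U)
    (hfwd : ∀ u v, u ∈ U → v ∉ U → f u v = c u v)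
    (hbwd : ∀ u v, u ∉ U → v ∈ U → f u v = 0) :
    (∑ w, f s w) - (∑ u, f u s) = ∑ u ∈ U, ∑ v ∈ Uᶜ, c u v := by
  have key : ∑ v ∈ U, ((∑ w, f v w) - (∑ u, f u v))
      = (∑ w, f s w) - (∑ u, f u s) := by
    apply Finset.sum_eq_single_of_mem s hs
    intro v hvU hvs
    have hvt : v ≠ t := fun h => ht (h ▸ hvU)
    rw [hcons v hvs hvt]; ring
  rw [← key, Finset.sum_sub_distrib]
  have h1 : ∀ v ∈ U, (∑ w, f v w) = (∑ w ∈ U, f v w) + ∑ w ∈ Uᶜ, f v w := by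
    intro v _; rw [Finset.sum_add_sum_compl]
  have h2 : ∀ v ∈ U, (∑ u, f u v) = (∑ u ∈ U, f u v) + ∑ u ∈ Uᶜ, f u v := by
    intro v _; rw [Finset.sum_add_sum_compl]
  rw [Finset.sum_congr rfl h1, Finset.sum_congr rfl h2,
    Finset.sum_add_distrib, Finset.sum_add_distrib]
  have hcancel : (∑ v ∈ U, ∑ w ∈ U, f v w) = ∑ v ∈ U, ∑ u ∈ U, f u v :=
    Finset.sum_comm
  have hzero : (∑ v ∈ U, ∑ u ∈ Uᶜ, f u v) = 0 := by
    apply Finset.sum_eq_zero; intro v hv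
    apply Finset.sum_eq_zero; intro u hu
    exact hbwd u v (Finset.mem_compl.mp hu) hv
  have hsat : (∑ v ∈ U, ∑ w ∈ Uᶜ, f v w) = ∑ u ∈ U, ∑ v ∈ Uᶜ, c u v := by
    apply Finset.sum_congr rfl; intro v hv
    exact Finset.sum_congr rfl fun w hw => hfwd v w hv (Finset.mem_compl.mp hw)
  rw [hcancel, hzero, hsat]; ring
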